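/- arXiv:2005.03829 — 3 statements merged into one kernel-verified Lean document; each statement's English description precedes it below -/
import Mathlib

section
/- Let G be a finite group whose order is divisible by at least two distinct primes, and let x, y ∈ G with {o(x), o(y)} = {p^m, p^n}, where p is a prime and m, n are positive integers with m > n. Then N[x] = N[y] in the order supergraph 𝒮(G) if and only if p^n·q ∉ π_e(G) for every prime q ≠ p. -/
/-- The closed neighborhood of a vertex `x` in a simple graph. -/
def closedNbhd {V : Type*} (Γ : SimpleGraph V) (x : V) : Set V :=
  insert x (Γ.neighborSet x)

/-- `z` strongly resolves `x` and `y` if some shortest path from `z` to `x`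
contains `y`, or some shortest path from `z` to `y` contains `x`. -/
def StronglyResolves {V : Type*} (Γ : SimpleGraph V) (z x y : V) : Prop :=
  (∃ w : Γ.Walk z x, w.IsPath ∧ w.length = Γ.dist z x ∧ y ∈ w.support) ∨
  (∃ w : Γ.Walk z y, w.IsPath ∧ w.length = Γ.dist z y ∧ x ∈ w.support)

/-- `S` is a strong resolving set if every pair of distinct vertices is
strongly resolved by some vertex of `S`. -/
def IsStrongResolvingSet {V : Type*} (Γ : SimpleGraph V) (S : Set V) : Prop :=
  ∀ x y : V, x ≠ y → ∃ z ∈ S, StronglyResolves Γ z x y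

/-- The strong metric dimension: the minimum size of a strong resolving set. -/
noncomputable def sdim {V : Type*} [Fintype V] (Γ : SimpleGraph V) : ℕ :=
  sInf {k | ∃ S : Finset V, S.card = k ∧ IsStrongResolvingSet Γ ↑S}

/-- The equivalence relation `x ≈ y` iff `N[x] = N[y]`. -/
def nbhdSetoid {V : Type*} (Γ : SimpleGraph V) : Setoid V :=
  ⟨fun x y => closedNbhd Γ x = closedNbhd Γ y,
   ⟨fun _ => rfl, Eq.symm, Eq.trans⟩⟩

/-- The reduced graph `ℛ_Γ`: vertices are the `≈`-classes, two distinct classes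
being adjacent iff some (equivalently, any) pair of their members is adjacent in `Γ`. -/
def reducedGraph {V : Type*} (Γ : SimpleGraph V) :
    SimpleGraph (Quotient (nbhdSetoid Γ)) where
  Adj a b := a ≠ b ∧ ∃ x y : V,
    Quotient.mk (nbhdSetoid Γ) x = a ∧ Quotient.mk (nbhdSetoid Γ) y = b ∧ Γ.Adj x y
  symm := by constructor; rintro a b ⟨h, x, y, hx, hy, hadj⟩; exact ⟨h.symm, y, x, hy, hx, hadj.symm⟩
  loopless := by constructor; rintro a ⟨h, -⟩; exact h rfl

/-- The order supergraph `𝒮(G)`: distinct `x, y` are adjacent iff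
`o(x) ∣ o(y)` or `o(y) ∣ o(x)`. -/
def orderSupergraph (G : Type*) [Group G] : SimpleGraph G where
  Adj x y := x ≠ y ∧ (orderOf x ∣ orderOf y ∨ orderOf y ∣ orderOf x)
  symm := by constructor; rintro x y ⟨h, h2⟩; exact ⟨h.symm, h2.symm⟩
  loopless := by constructor; rintro x ⟨h, -⟩; exact h rfl

/-- The enhanced power graph `𝒫_E(G)`: distinct `x, y` are adjacent iff
`⟨x, y⟩` is cyclic. -/
def enhancedPowerGraph (G : Type*) [Group G] : SimpleGraph G where
  Adj x y := x ≠ y ∧ IsCyclic (Subgroup.closure ({x, y} : Set G))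
  symm := by constructor; rintro x y ⟨h, h2⟩; rw [Set.pair_comm] at h2; exact ⟨h.symm, h2⟩
  loopless := by constructor; rintro x ⟨h, -⟩; exact h rfl

/-- The reduced power graph `𝒫_R(G)`: distinct `x, y` are adjacent iff
`⟨x⟩ ⊂ ⟨y⟩` or `⟨y⟩ ⊂ ⟨x⟩`. -/
def reducedPowerGraph (G : Type*) [Group G] : SimpleGraph G where
  Adj x y := Subgroup.zpowers x < Subgroup.zpowers y ∨ Subgroup.zpowers y < Subgroup.zpowers x
  symm := by constructor; rintro x y h; exact h.symm
  loopless := by constructor; rintro x h; rcases h with h | h <;> exact lt_irrefl _ h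

/-- `Ω n`: the number of prime factors of `n` counted with multiplicity. -/
def bigOmega (n : ℕ) : ℕ := n.primeFactorsList.length

/-- A maximal cyclic subgroup: a cyclic subgroup not properly contained in any
cyclic subgroup. -/
def IsMaxCyclic {G : Type*} [Group G] (M : Subgroup G) : Prop :=
  IsCyclic M ∧ ∀ N : Subgroup G, IsCyclic N → M ≤ N → M = N

/-- `ℳ_g`: the set of maximal cyclic subgroups containing `g`. -/
def maxCyclicOn {G : Type*} [Group G] (g : G) : Set (Subgroup G) :=
  {M | IsMaxCyclic M ∧ g ∈ M}

/-!
If `o(x) = p^m` and `o(y) = p^k` with `k < m`, then `N[x] ⊆ N[y]` always, since every order comparable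
with `p^m` is a multiple of `p^k` or a power of `p`. Conversely an element of order `p^k·q` with `q ≠ p`
is adjacent to `y` but not to `x`. If there is no such element, every element `z` whose order is a
nonzero multiple of `p^k` has `p`-power order: a prime `q ≠ p` dividing `o(z)` would give
`p^k·q ∣ o(z)`, hence a power of `z` of order `p^k·q`. So `N[y] ⊆ N[x]` as well. No finiteness is
needed: an element of infinite order has `orderOf = 0`, a multiple of every order.
-/

theorem mem_closedNbhd_orderSupergraph {G : Type*} [Group G] {x z : G} :
    z ∈ closedNbhd (orderSupergraph G) x ↔ orderOf x ∣ orderOf z ∨ orderOf z ∣ orderOf x := by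
  simp only [closedNbhd, Set.mem_insert_iff, SimpleGraph.mem_neighborSet, orderSupergraph]
  by_cases hzx : z = x
  · simp [hzx]
  · simp [hzx, Ne.symm hzx]

theorem pow_dvd_pow_or_pow_dvd_pow {M : Type*} [Monoid M] (p : M) (a b : ℕ) :
    p ^ a ∣ p ^ b ∨ p ^ b ∣ p ^ a :=
  (le_total a b).imp (pow_dvd_pow p) (pow_dvd_pow p)

theorem Nat.pow_mul_prime_not_dvd_or_dvd_pow {p q k m : ℕ} (hp : p.Prime) (hq : q.Prime)
    (hqp : q ≠ p) (hkm : k < m) : ¬(p ^ m ∣ p ^ k * q ∨ p ^ k * q ∣ p ^ m) := by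
  rintro (h | h)
  · have h' : p ^ k * p ∣ p ^ k * q := (pow_succ p k ▸ pow_dvd_pow p hkm).trans h
    exact hqp ((Nat.prime_dvd_prime_iff_eq hp hq).mp
      (Nat.dvd_of_mul_dvd_mul_left (pow_pos hp.pos k) h')).symm
  · exact hqp ((Nat.prime_dvd_prime_iff_eq hq hp).mp
      (hq.dvd_of_dvd_pow ((dvd_mul_left q _).trans h)))

theorem exists_orderOf_eq_prime_pow_of_pow_dvd {G : Type*} [Group G] {p k : ℕ} (hp : p.Prime)
    (hG : ∀ q : ℕ, q.Prime → q ≠ p → ¬∃ g : G, orderOf g = p ^ k * q)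
    {z : G} (hz : orderOf z ≠ 0) (hkz : p ^ k ∣ orderOf z) :
    ∃ a, orderOf z = p ^ a := by
  refine ⟨_, Nat.eq_prime_pow_of_unique_prime_dvd hz fun {q} hq hqz => ?_⟩
  by_contra hqp
  have hcop : Nat.Coprime (p ^ k) q := ((Nat.coprime_primes hp hq).mpr (Ne.symm hqp)).pow_left k
  exact hG q hq hqp ⟨_, orderOf_pow_orderOf_div hz (hcop.mul_dvd_of_dvd_of_dvd hkz hqz)⟩

section PrimePowerOrders

variable {G : Type*} [Group G] {x y : G} {p m k : ℕ}

theorem closedNbhd_orderSupergraph_subset_of_orderOf_eq_pow (hp : p.Prime)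
    (hx : orderOf x = p ^ m) (hy : orderOf y = p ^ k) (hkm : k ≤ m) :
    closedNbhd (orderSupergraph G) x ⊆ closedNbhd (orderSupergraph G) y := by
  intro z hz
  rw [mem_closedNbhd_orderSupergraph, hx] at hz
  rw [mem_closedNbhd_orderSupergraph, hy]
  rcases hz with hmz | hzm
  · exact Or.inl ((pow_dvd_pow p hkm).trans hmz)
  · obtain ⟨a, -, hza⟩ := (Nat.dvd_prime_pow hp).mp hzm
    exact hza ▸ pow_dvd_pow_or_pow_dvd_pow p k a

theorem closedNbhd_orderSupergraph_subset_of_forall_not_orderOf_eq (hp : p.Prime)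
    (hx : orderOf x = p ^ m) (hy : orderOf y = p ^ k) (hkm : k ≤ m)
    (hG : ∀ q : ℕ, q.Prime → q ≠ p → ¬∃ g : G, orderOf g = p ^ k * q) :
    closedNbhd (orderSupergraph G) y ⊆ closedNbhd (orderSupergraph G) x := by
  intro z hz
  rw [mem_closedNbhd_orderSupergraph, hy] at hz
  rw [mem_closedNbhd_orderSupergraph, hx]
  rcases hz with hkz | hzk
  · rcases eq_or_ne (orderOf z) 0 with hz0 | hz0
    · exact Or.inl (hz0 ▸ dvd_zero _)
    · obtain ⟨a, hza⟩ := exists_orderOf_eq_prime_pow_of_pow_dvd hp hG hz0 hkz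
      exact hza ▸ pow_dvd_pow_or_pow_dvd_pow p m a
  · exact Or.inr (hzk.trans (pow_dvd_pow p hkm))

theorem forall_not_orderOf_eq_of_closedNbhd_orderSupergraph_eq (hp : p.Prime)
    (hx : orderOf x = p ^ m) (hy : orderOf y = p ^ k) (hkm : k < m)
    (h : closedNbhd (orderSupergraph G) x = closedNbhd (orderSupergraph G) y) :
    ∀ q : ℕ, q.Prime → q ≠ p → ¬∃ g : G, orderOf g = p ^ k * q := by
  rintro q hq hqp ⟨g, hg⟩
  have hgy : g ∈ closedNbhd (orderSupergraph G) y := by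
    rw [mem_closedNbhd_orderSupergraph, hy, hg]
    exact Or.inl (dvd_mul_right _ _)
  rw [← h, mem_closedNbhd_orderSupergraph, hx, hg] at hgy
  exact Nat.pow_mul_prime_not_dvd_or_dvd_pow hp hq hqp hkm hgy

theorem closedNbhd_orderSupergraph_eq_iff_of_orderOf_eq_pow (hp : p.Prime)
    (hx : orderOf x = p ^ m) (hy : orderOf y = p ^ k) (hkm : k < m) :
    closedNbhd (orderSupergraph G) x = closedNbhd (orderSupergraph G) y ↔
      ∀ q : ℕ, q.Prime → q ≠ p → ¬∃ g : G, orderOf g = p ^ k * q :=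
  ⟨forall_not_orderOf_eq_of_closedNbhd_orderSupergraph_eq hp hx hy hkm, fun hG =>
    (closedNbhd_orderSupergraph_subset_of_orderOf_eq_pow hp hx hy hkm.le).antisymm
      (closedNbhd_orderSupergraph_subset_of_forall_not_orderOf_eq hp hx hy hkm.le hG)⟩

end PrimePowerOrders

theorem closedNbhd_eq_iff_primePowers_orderSupergraph_general (G : Type*) [Group G]
    (x y : G) (p m k : ℕ) (hp : p.Prime) (hmk : k < m)
    (horders : ({orderOf x, orderOf y} : Set ℕ) = {p ^ m, p ^ k}) :
    closedNbhd (orderSupergraph G) x = closedNbhd (orderSupergraph G) y ↔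
      ∀ q : ℕ, q.Prime → q ≠ p → ¬∃ g : G, orderOf g = p ^ k * q := by
  rcases Set.pair_eq_pair_iff.mp horders with ⟨hx, hy⟩ | ⟨hx, hy⟩
  · exact closedNbhd_orderSupergraph_eq_iff_of_orderOf_eq_pow hp hx hy hmk
  · rw [eq_comm]
    exact closedNbhd_orderSupergraph_eq_iff_of_orderOf_eq_pow hp hy hx hmk

/-- Corollary 3.6: for elements of prime power orders `p^m, p^k` with `m > k ≥ 1`,
`N[x] = N[y]` in `𝒮(G)` iff `p^k·q ∉ π_e(G)` for every prime `q ≠ p`. -/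
theorem closedNbhd_eq_iff_primePowers_orderSupergraph (G : Type*) [Group G] [Fintype G]
    (hG : ∃ r s : ℕ, r.Prime ∧ s.Prime ∧ r ≠ s ∧ r ∣ Fintype.card G ∧ s ∣ Fintype.card G)
    (x y : G) (p m k : ℕ) (hp : p.Prime) (hk : 0 < k) (hmk : k < m)
    (horders : ({orderOf x, orderOf y} : Set ℕ) = {p ^ m, p ^ k}) :
    closedNbhd (orderSupergraph G) x = closedNbhd (orderSupergraph G) y ↔
      ∀ q : ℕ, q.Prime → q ≠ p → ¬∃ g : G, orderOf g = p ^ k * q :=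
  closedNbhd_eq_iff_primePowers_orderSupergraph_general G x y p m k hp hmk horders
end

section
/- Let G be a non-cyclic abelian p-group of order n and exponent p^m, where p is a prime. Then sdim(𝒫_E(G)) = n − m − 1. -/
/-
In `𝒫_E(G)` the identity is adjacent to every vertex, so the diameter is at most two, and a vertex
`z ∉ {x, y}` strongly resolves `x, y` only if `x ~ y` and `z` is adjacent to exactly one of them.
Adjacent elements of the same order generate the same cyclic subgroup, hence are closed twins; so
the elements outside a strong resolving set have pairwise distinct orders, all dividing `p ^ m`,
and there are at most `m + 1` of them. Conversely, take `g` of order `p ^ m` and, as `G` is not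
cyclic, `t ∉ ⟨g⟩` with `t ^ p = 1`. Then the complement of `{g ^ p ^ i | i ≤ m}` is strongly
resolving: `g ^ p ^ i * t` resolves `g ^ p ^ (i + 1)` and `g ^ p ^ j` for every `j ≤ i`.
-/

open Finset Subgroup

namespace SimpleGraph

variable {V : Type*} {Γ : SimpleGraph V} {x y z : V}

lemma Walk.adj_of_mem_support_of_length_le_two (w : Γ.Walk z x) (hw : w.length ≤ 2)
    (hy : y ∈ w.support) (hyz : y ≠ z) (hyx : y ≠ x) :
    Γ.Adj z y ∧ Γ.Adj y x ∧ w.length = 2 := by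
  classical
  have htake : (w.takeUntil y hy).length ≠ 0 := fun h => hyz (eq_of_length_eq_zero h).symm
  have hdrop : (w.dropUntil y hy).length ≠ 0 := fun h => hyx (eq_of_length_eq_zero h)
  have hsum := congrArg Walk.length (w.take_spec hy)
  rw [length_append] at hsum
  exact ⟨adj_of_length_eq_one (p := w.takeUntil y hy) (by omega),
    adj_of_length_eq_one (p := w.dropUntil y hy) (by omega), by omega⟩

lemma adj_of_mem_support_of_length_eq_dist (hd : Γ.dist z x ≤ 2) (w : Γ.Walk z x)
    (hw : w.length = Γ.dist z x) (hy : y ∈ w.support) (hyz : y ≠ z) (hyx : y ≠ x) :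
    Γ.Adj z y ∧ Γ.Adj y x ∧ ¬Γ.Adj z x := by
  obtain ⟨hzy, hyx, hlen⟩ := w.adj_of_mem_support_of_length_le_two (hw ▸ hd) hy hyz hyx
  refine ⟨hzy, hyx, fun hzx => ?_⟩
  rw [dist_eq_one_iff_adj.mpr hzx] at hw
  omega

lemma connected_of_forall_adj {c : V} (hc : ∀ v, v ≠ c → Γ.Adj c v) : Γ.Connected := by
  have hreach : ∀ v, Γ.Reachable c v := fun v => by
    rcases eq_or_ne v c with rfl | hv
    · rfl
    · exact (hc v hv).reachable
  have : Nonempty V := ⟨c⟩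
  exact ⟨fun u v => (hreach u).symm.trans (hreach v)⟩

lemma dist_le_two_of_forall_adj {c : V} (hc : ∀ v, v ≠ c → Γ.Adj c v) (u v : V) :
    Γ.dist u v ≤ 2 := by
  have hle : ∀ w, Γ.dist c w ≤ 1 := fun w => by
    rcases eq_or_ne w c with rfl | hw
    · simp
    · exact (dist_eq_one_iff_adj.mpr (hc w hw)).le
  calc Γ.dist u v ≤ Γ.dist u c + Γ.dist c v := (connected_of_forall_adj hc).dist_triangle
    _ ≤ 2 := by rw [dist_comm]; linarith [hle u, hle v]

end SimpleGraph

open SimpleGraph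

section StrongResolution

variable {V : Type*} {Γ : SimpleGraph V} {x y z : V}

lemma StronglyResolves.symm (h : StronglyResolves Γ z x y) : StronglyResolves Γ z y x :=
  Or.symm h

lemma SimpleGraph.Reachable.stronglyResolves_self (h : Γ.Reachable x y) :
    StronglyResolves Γ x x y := by
  obtain ⟨w, hw, hl⟩ := h.exists_path_of_dist
  exact Or.inr ⟨w, hw, hl, w.start_mem_support⟩

lemma stronglyResolves_of_adj (hzx : z ≠ x) (hzy : Γ.Adj z y) (hyx : Γ.Adj y x)
    (hnzx : ¬Γ.Adj z x) : StronglyResolves Γ z x y := by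
  let w : Γ.Walk z x := .cons hzy hyx.toWalk
  have hdist : Γ.dist z x = 2 := by
    have hle : Γ.dist z x ≤ 2 := dist_le w
    have hne0 : Γ.dist z x ≠ 0 := by rwa [Ne, w.reachable.dist_eq_zero_iff]
    have hne1 : Γ.dist z x ≠ 1 := fun h => hnzx (dist_eq_one_iff_adj.mp h)
    omega
  refine Or.inl ⟨w, ?_, hdist.symm ▸ rfl, by simp [w]⟩
  simp [w, hzx, hzy.ne, hyx.ne]

lemma StronglyResolves.adj_and_not_iff (hdiam : ∀ u v, Γ.dist u v ≤ 2) (hzx : z ≠ x)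
    (hzy : z ≠ y) (hxy : x ≠ y) (h : StronglyResolves Γ z x y) :
    Γ.Adj x y ∧ ¬(Γ.Adj z x ↔ Γ.Adj z y) := by
  rcases h with ⟨w, -, hw, hy⟩ | ⟨w, -, hw, hx⟩
  · obtain ⟨h₁, h₂, h₃⟩ :=
      adj_of_mem_support_of_length_eq_dist (hdiam z x) w hw hy hzy.symm hxy.symm
    exact ⟨h₂.symm, by tauto⟩
  · obtain ⟨h₁, h₂, h₃⟩ := adj_of_mem_support_of_length_eq_dist (hdiam z y) w hw hx hzx.symm hxy
    exact ⟨h₂, by tauto⟩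

end StrongResolution

lemma IsCyclic.mem_zpowers_of_orderOf_dvd {α : Type*} [Group α] [Finite α] [IsCyclic α]
    {a b : α} (h : orderOf a ∣ orderOf b) : a ∈ zpowers b := by
  classical
  have := Fintype.ofFinite α
  -- `⟨b⟩` already supplies all of the at most `orderOf b` solutions of `x ^ orderOf b = 1`.
  have hsub : (zpowers b : Set α).toFinset ⊆ ({x | x ^ orderOf b = 1} : Finset α) := fun x hx => by
    rw [Set.mem_toFinset] at hx
    simpa using orderOf_dvd_iff_pow_eq_one.mp (orderOf_dvd_of_mem_zpowers hx)
  have heq := Finset.eq_of_subset_of_card_le hsub (by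
    simp only [Set.toFinset_card, SetLike.coe_sort_coe, Fintype.card_zpowers]
    exact IsCyclic.card_pow_eq_one_le (orderOf_pos b))
  have ha : a ∈ ({x | x ^ orderOf b = 1} : Finset α) := by
    simpa using orderOf_dvd_iff_pow_eq_one.mp h
  rwa [← heq, Set.mem_toFinset] at ha

section EnhancedPowerGraph

variable {G : Type*} [Group G] {x y z : G}

lemma enhancedPowerGraph_adj_of_mem_zpowers (hne : x ≠ y) (hx : x ∈ zpowers y) :
    (enhancedPowerGraph G).Adj x y :=
  ⟨hne, isCyclic_of_le <| (closure_le _).mpr <|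
    Set.insert_subset_iff.mpr ⟨hx, Set.singleton_subset_iff.mpr (mem_zpowers y)⟩⟩

lemma enhancedPowerGraph_dist_le_two (x y : G) : (enhancedPowerGraph G).dist x y ≤ 2 :=
  dist_le_two_of_forall_adj (fun _ hv => enhancedPowerGraph_adj_of_mem_zpowers hv.symm (one_mem _))
    x y

lemma enhancedPowerGraph_connected : (enhancedPowerGraph G).Connected :=
  connected_of_forall_adj fun _ hv => enhancedPowerGraph_adj_of_mem_zpowers hv.symm (one_mem _)

lemma enhancedPowerGraph_adj_congr_right (hzx : z ≠ x) (hzy : z ≠ y)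
    (h : zpowers x = zpowers y) :
    (enhancedPowerGraph G).Adj z x ↔ (enhancedPowerGraph G).Adj z y := by
  have hcl : closure {z, x} = closure {z, y} := by
    simp only [Set.insert_eq, Subgroup.closure_union, ← zpowers_eq_closure, h]
  exact and_congr (iff_of_true hzx hzy) (hcl ▸ Iff.rfl)

lemma mem_zpowers_of_enhancedPowerGraph_adj [Finite G] (hadj : (enhancedPowerGraph G).Adj x y)
    (h : orderOf x ∣ orderOf y) : x ∈ zpowers y := by
  set H := closure ({x, y} : Set G)
  have : IsCyclic H := hadj.2
  have hx : x ∈ H := subset_closure (Set.mem_insert x {y})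
  have hy : y ∈ H := subset_closure (Set.mem_insert_of_mem x rfl)
  have hmem : (⟨x, hx⟩ : H) ∈ zpowers ⟨y, hy⟩ :=
    IsCyclic.mem_zpowers_of_orderOf_dvd (by simpa only [orderOf_mk] using h)
  simpa [MonoidHom.map_zpowers] using mem_map_of_mem H.subtype hmem

lemma zpowers_eq_of_enhancedPowerGraph_adj [Finite G] (hadj : (enhancedPowerGraph G).Adj x y)
    (h : orderOf x = orderOf y) : zpowers x = zpowers y :=
  le_antisymm (zpowers_le.mpr (mem_zpowers_of_enhancedPowerGraph_adj hadj h.dvd))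
    (zpowers_le.mpr (mem_zpowers_of_enhancedPowerGraph_adj hadj.symm h.symm.dvd))

/-- Distinct elements outside `S` have distinct orders: adjacent elements of equal order are
closed twins, which no third vertex strongly resolves. -/
lemma IsStrongResolvingSet.card_compl_le_card_divisors_exponent [Fintype G] [DecidableEq G]
    {S : Finset G} (hS : IsStrongResolvingSet (enhancedPowerGraph G) S) :
    Sᶜ.card ≤ (Monoid.exponent G).divisors.card := by
  refine card_le_card_of_injOn orderOf (fun a _ => Nat.mem_divisors.mpr
    ⟨Monoid.order_dvd_exponent a, Monoid.exponent_ne_zero_of_finite⟩) fun a ha b hb hab => ?_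
  by_contra hne
  obtain ⟨z, hz, hres⟩ := hS a b hne
  have hza : z ≠ a := fun h => mem_compl.mp ha (h ▸ hz)
  have hzb : z ≠ b := fun h => mem_compl.mp hb (h ▸ hz)
  obtain ⟨hadj, hnot⟩ := hres.adj_and_not_iff enhancedPowerGraph_dist_le_two hza hzb hne
  exact hnot (enhancedPowerGraph_adj_congr_right hza hzb
    (zpowers_eq_of_enhancedPowerGraph_adj hadj hab))

end EnhancedPowerGraph

lemma Subgroup.exists_notMem_pow_mem {G : Type*} [Group G] {H : Subgroup G}
    {p : ℕ} : ∀ {m : ℕ} {x : G}, x ∉ H → x ^ p ^ m ∈ H → ∃ y ∉ H, y ^ p ∈ H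
  | 0, x, hx, hxm => absurd (by simpa using hxm) hx
  | m + 1, x, hx, hxm => by
    by_cases hxp : x ^ p ∈ H
    · exact ⟨x, hx, hxp⟩
    · rw [pow_succ', pow_mul] at hxm
      exact exists_notMem_pow_mem hxp hxm

section CommGroup

variable {G : Type*} [CommGroup G] {p m : ℕ} {g t : G}

/-- Some `y ∉ ⟨g⟩` has `y ^ p = g ^ s`; as `g` has maximal order, `p ∣ s`, and
`t = y * g ^ (-s / p)`. -/
lemma exists_pow_eq_one_notMem_zpowers [Finite G] (hp : p.Prime)
    (hexp : Monoid.exponent G = p ^ m) (hg : orderOf g = p ^ m) (htop : zpowers g ≠ ⊤) :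
    ∃ t : G, t ^ p = 1 ∧ t ∉ zpowers g := by
  obtain ⟨x, hx⟩ : ∃ x, x ∉ zpowers g := by
    by_contra! h
    exact htop (eq_top_iff' _ |>.mpr h)
  have hpow : ∀ y : G, y ^ p ^ m = 1 := fun y => hexp ▸ Monoid.pow_exponent_eq_one y
  obtain ⟨y, hy, hyp⟩ := exists_notMem_pow_mem hx ((hpow x).symm ▸ one_mem _)
  obtain ⟨s, hs⟩ : ∃ s : ℕ, g ^ s = y ^ p := mem_powers_iff_mem_zpowers.mpr hyp
  obtain ⟨k, rfl⟩ : ∃ k, m = k + 1 := Nat.exists_eq_succ_of_ne_zero fun hm => hy <| by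
    have hy1 := hpow y
    rw [hm, pow_zero, pow_one] at hy1
    exact hy1 ▸ one_mem _
  have hps : p ∣ s := by
    have hgs : g ^ (s * p ^ k) = 1 := by
      rw [pow_mul, hs, ← pow_mul, ← pow_succ', hpow y]
    have := orderOf_dvd_of_pow_eq_one hgs
    rw [hg, pow_succ, mul_comm s] at this
    exact Nat.dvd_of_mul_dvd_mul_left (pow_pos hp.pos k) this
  obtain ⟨u, rfl⟩ := hps
  refine ⟨y * (g ^ u)⁻¹, ?_, ?_⟩
  · rw [mul_pow, inv_pow, ← pow_mul, mul_comm u p, hs, mul_inv_cancel]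
  · rwa [mul_mem_cancel_right (inv_mem (pow_mem (mem_zpowers g) u))]

lemma orderOf_pow_prime_pow (hp : p.Prime) (hg : orderOf g = p ^ m) {i : ℕ} (hi : i ≤ m) :
    orderOf (g ^ p ^ i) = p ^ (m - i) := by
  rw [orderOf_pow_of_dvd (pow_ne_zero i hp.ne_zero) (hg ▸ pow_dvd_pow p hi), hg,
    Nat.pow_div hi hp.pos]

lemma injOn_pow_prime_pow (hp : p.Prime) (hg : orderOf g = p ^ m) :
    Set.InjOn (fun i => g ^ p ^ i) (Set.Iic m) := fun i hi j hj hij => by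
  have := congrArg orderOf hij
  simp only [orderOf_pow_prime_pow hp hg hi, orderOf_pow_prime_pow hp hg hj] at this
  have := Nat.pow_right_injective hp.two_le this
  simp only [Set.mem_Iic] at hi hj
  omega

/-- `z = g ^ p ^ i * t` is adjacent to `z ^ p = g ^ p ^ (i + 1)`, but not to `g ^ p ^ j`: its order
divides that of `g ^ p ^ j`, so adjacency would put `z` in `⟨g⟩`. -/
lemma stronglyResolves_pow_prime_pow [Finite G] (hp : p.Prime) (hg : orderOf g = p ^ m)
    (ht : t ^ p = 1) (htg : t ∉ zpowers g) {i j : ℕ} (hji : j ≤ i) (him : i < m) :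
    StronglyResolves (enhancedPowerGraph G) (g ^ p ^ i * t) (g ^ p ^ j) (g ^ p ^ (i + 1)) := by
  let z := g ^ p ^ i * t
  have hgpow : ∀ k : ℕ, g ^ p ^ k ∈ zpowers g := fun k => pow_mem (mem_zpowers g) _
  have hz : z ∉ zpowers g := by rwa [mul_mem_cancel_left (hgpow i)]
  have hzp : z ^ p = g ^ p ^ (i + 1) := by rw [mul_pow, ht, mul_one, ← pow_mul, pow_succ]
  have hne : g ^ p ^ (i + 1) ≠ g ^ p ^ j :=
    (injOn_pow_prime_pow hp hg).ne (Set.mem_Iic.mpr him) (Set.mem_Iic.mpr (by omega)) (by omega)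
  have hzj : orderOf z ∣ orderOf (g ^ p ^ j) := by
    obtain ⟨k, hk⟩ : ∃ k, m - i = k + 1 := ⟨m - i - 1, by omega⟩
    have hzpow : z ^ p ^ (m - i) = 1 := by
      rw [mul_pow, ← pow_mul, ← pow_add, Nat.add_sub_cancel' him.le, ← hg, pow_orderOf_eq_one,
        hk, pow_succ', pow_mul, ht, one_pow, one_mul]
    rw [orderOf_pow_prime_pow hp hg (by omega)]
    exact (orderOf_dvd_of_pow_eq_one hzpow).trans (pow_dvd_pow p (by omega))
  refine stronglyResolves_of_adj (ne_of_mem_of_not_mem (hgpow j) hz).symm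
    (enhancedPowerGraph_adj_of_mem_zpowers (ne_of_mem_of_not_mem (hgpow (i + 1)) hz)
      (hzp ▸ pow_mem (mem_zpowers z) p)).symm
    (enhancedPowerGraph_adj_of_mem_zpowers hne ?_)
    fun hadj => hz (zpowers_le.mpr (hgpow j) (mem_zpowers_of_enhancedPowerGraph_adj hadj hzj))
  rw [show p ^ (i + 1) = p ^ j * p ^ (i + 1 - j) by rw [← pow_add]; congr 1; omega, pow_mul]
  exact pow_mem (mem_zpowers _) _

lemma isStrongResolvingSet_compl_image_pow_prime_pow [Fintype G] [DecidableEq G]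
    (hp : p.Prime) (hg : orderOf g = p ^ m) (ht : t ^ p = 1) (htg : t ∉ zpowers g) :
    IsStrongResolvingSet (enhancedPowerGraph G) ↑((range (m + 1)).image fun i => g ^ p ^ i)ᶜ := by
  set T := (range (m + 1)).image fun i => g ^ p ^ i
  have hreach := enhancedPowerGraph_connected (G := G).preconnected
  have key : ∀ {i j : ℕ}, j < i → i ≤ m →
      ∃ z ∈ (↑Tᶜ : Set G), StronglyResolves (enhancedPowerGraph G) z (g ^ p ^ j) (g ^ p ^ i) := by
    intro i j hji him
    obtain ⟨i, rfl⟩ : ∃ i', i = i' + 1 := ⟨i - 1, by omega⟩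
    refine ⟨g ^ p ^ i * t, ?_, stronglyResolves_pow_prime_pow hp hg ht htg (by omega) (by omega)⟩
    simp only [coe_compl, Set.mem_compl_iff, mem_coe, T, mem_image, not_exists, not_and]
    intro k _ hk
    exact htg <| (mul_mem_cancel_left (pow_mem (mem_zpowers g) _)).mp <|
      hk ▸ pow_mem (mem_zpowers g) _
  intro x y hxy
  by_cases hx : x ∈ T
  swap
  · exact ⟨x, by simpa using hx, (hreach x y).stronglyResolves_self⟩
  by_cases hy : y ∈ T
  swap
  · exact ⟨y, by simpa using hy, (hreach y x).stronglyResolves_self.symm⟩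
  obtain ⟨i, hi, rfl⟩ := mem_image.mp hx
  obtain ⟨j, hj, rfl⟩ := mem_image.mp hy
  rw [mem_range] at hi hj
  rcases lt_trichotomy i j with hij | rfl | hij
  · exact key hij (by omega)
  · exact absurd rfl hxy
  · obtain ⟨z, hz, hres⟩ := key hij (by omega)
    exact ⟨z, hz, hres.symm⟩

end CommGroup

theorem sdim_enhancedPowerGraph_abelian_pGroup_general (G : Type*) [CommGroup G] [Fintype G]
    (p m : ℕ) (hp : p.Prime) (hnc : ¬IsCyclic G)
    (hexp : Monoid.exponent G = p ^ m) :
    sdim (enhancedPowerGraph G) = Fintype.card G - m - 1 := by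
  classical
  obtain ⟨g, hg⟩ := Monoid.exists_orderOf_eq_exponent (Monoid.ExponentExists.of_finite (G := G))
  rw [hexp] at hg
  obtain ⟨t, ht, htg⟩ := exists_pow_eq_one_notMem_zpowers hp hexp hg
    fun h => hnc (isCyclic_iff_exists_zpowers_eq_top.mpr ⟨g, h⟩)
  have hcard : ((range (m + 1)).image fun i => g ^ p ^ i).card = m + 1 := by
    rw [card_image_of_injOn ((injOn_pow_prime_pow hp hg).mono fun i hi => ?_), card_range]
    simpa [Nat.lt_succ_iff] using hi
  refine IsLeast.csInf_eq ⟨⟨_, by rw [card_compl, hcard]; omega,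
    isStrongResolvingSet_compl_image_pow_prime_pow hp hg ht htg⟩, ?_⟩
  rintro _ ⟨S, rfl, hS⟩
  have hcompl := hS.card_compl_le_card_divisors_exponent
  rw [card_compl, hexp, Nat.divisors_prime_pow hp, card_map, card_range] at hcompl
  omega

/-- Proposition 4.8: for a non-cyclic abelian `p`-group of order `n` and exponent `p^m`,
`sdim(𝒫_E(G)) = n - m - 1`. -/
theorem sdim_enhancedPowerGraph_abelian_pGroup (G : Type*) [CommGroup G] [Fintype G]
    (p m : ℕ) (hp : p.Prime) (hG : IsPGroup p G) (hnc : ¬IsCyclic G)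
    (hexp : Monoid.exponent G = p ^ m) :
    sdim (enhancedPowerGraph G) = Fintype.card G - m - 1 :=
  sdim_enhancedPowerGraph_abelian_pGroup_general G p m hp hnc hexp
end

section
/- Let G be a finite group. Then every maximal clique of the reduced graph ℛ_{𝒫_E(G)} of the enhanced power graph of G is a subset of some maximal cyclic subgroup of G. -/
/-! Any two elements of `S` lie in a common cyclic subgroup, and this forces all of `S` into one.
Induct on an exponent `n` of `S`, written as a product of coprime prime powers. For `n = p ^ k` the
element of `S` of largest order generates the others, because inside a cyclic group `⟨y⟩` contains
every element whose order divides that of `y`. For `n = a * b` with `a, b` coprime, split every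
element into its `a`-part and `b`-part, generate each family by a single element, and multiply the
two generators: they commute and have coprime orders, so their product generates both. -/

open Subgroup

theorem dvd_of_le_of_dvd_prime_pow {p k a b : ℕ} (hp : p.Prime) (ha : a ∣ p ^ k)
    (hb : b ∣ p ^ k) (hab : a ≤ b) : a ∣ b := by
  obtain ⟨i, -, rfl⟩ := (Nat.dvd_prime_pow hp).mp ha
  obtain ⟨j, -, rfl⟩ := (Nat.dvd_prime_pow hp).mp hb
  exact pow_dvd_pow p ((Nat.pow_le_pow_iff_right hp.one_lt).mp hab)

section

variable {G : Type*} [Group G]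

open Finset in
theorem mem_zpowers_of_orderOf_dvd [Finite G] {w x y : G}
    (hx : x ∈ zpowers w) (hy : y ∈ zpowers w) (hxy : orderOf x ∣ orderOf y) :
    x ∈ zpowers y := by
  classical
  -- A cyclic group has at most `d` solutions of `a ^ d = 1`, and `⟨y⟩` already supplies `d`.
  have : Fintype (zpowers w) := Fintype.ofFinite _
  set y' : zpowers w := ⟨y, hy⟩
  set roots : Finset (zpowers w) := {a | a ^ orderOf y = 1}
  have hsub : (zpowers y' : Set (zpowers w)).toFinset ⊆ roots := by
    intro a ha
    obtain ⟨k, rfl⟩ := mem_zpowers_iff.mp (Set.mem_toFinset.mp ha)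
    have hy' : y' ^ orderOf y = 1 := by
      rw [← Subgroup.orderOf_mk y hy]; exact pow_orderOf_eq_one y'
    simp only [roots, Finset.mem_filter, Finset.mem_univ, true_and]
    rw [← zpow_natCast, ← zpow_mul, mul_comm, zpow_mul, zpow_natCast, hy', one_zpow]
  have hcard : #roots ≤ #(zpowers y' : Set (zpowers w)).toFinset :=
    calc #roots ≤ orderOf y := IsCyclic.card_pow_eq_one_le (orderOf_pos y)
      _ = _ := by
        rw [Set.toFinset_card, ← Nat.card_eq_fintype_card]
        exact (Subgroup.orderOf_mk y hy).symm.trans (Nat.card_zpowers y').symm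
  have hx' : (⟨x, hx⟩ : zpowers w) ∈ zpowers y' := by
    rw [← SetLike.mem_coe, ← Set.mem_toFinset, Finset.eq_of_subset_of_card_le hsub hcard]
    simp [roots, Subtype.ext_iff, orderOf_dvd_iff_pow_eq_one.mp hxy]
  simpa using (zpowers w).subtype.map_zpowers y' ▸ mem_map_of_mem (zpowers w).subtype hx'

theorem Commute.mem_zpowers_mul_of_coprime {a b : G} (hab : Commute a b)
    {m n : ℕ} (hmn : m.Coprime n) (ha : a ^ m = 1) (hb : b ^ n = 1) :
    a ∈ zpowers (a * b) := by
  obtain ⟨u, v, huv⟩ := Nat.isCoprime_iff_coprime.mpr hmn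
  have hbn : b ^ (v * n) = 1 := by rw [mul_comm, zpow_mul, zpow_natCast, hb, one_zpow]
  have ham : a ^ (u * m) = 1 := by rw [mul_comm, zpow_mul, zpow_natCast, ha, one_zpow]
  have han : a ^ (v * n) = a := by
    rw [show v * n = 1 - u * m by linear_combination huv, zpow_sub, zpow_one, ham, inv_one,
      mul_one]
  simpa [hab.mul_zpow, hbn, han] using zpow_mem (mem_zpowers (a * b)) (v * n)

theorem exists_zpow_mul_zpow_eq_self_of_coprime {m n : ℕ} (hmn : m.Coprime n) :
    ∃ u v : ℤ, ∀ x : G, x ^ (m * n) = 1 →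
      (x ^ u) ^ m = 1 ∧ (x ^ v) ^ n = 1 ∧ x ^ u * x ^ v = x := by
  obtain ⟨v, u, huv⟩ := Nat.isCoprime_iff_coprime.mpr hmn
  refine ⟨u * n, v * m, fun x hx => ⟨?_, ?_, ?_⟩⟩
  · rw [← zpow_natCast, ← zpow_mul, show u * n * m = ((m * n : ℕ) : ℤ) * u by push_cast; ring,
      zpow_mul, zpow_natCast, hx, one_zpow]
  · rw [← zpow_natCast, ← zpow_mul, show v * m * n = ((m * n : ℕ) : ℤ) * v by push_cast; ring,
      zpow_mul, zpow_natCast, hx, one_zpow]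
  · rw [← zpow_add]
    convert zpow_one x using 2
    linear_combination huv

theorem exists_closure_eq_zpowers_of_pow_prime_pow_eq_one [Finite G] {p k : ℕ} (hp : p.Prime)
    (S : Finset G) (hSp : ∀ x ∈ S, x ^ p ^ k = 1)
    (hS : ∀ x ∈ S, ∀ y ∈ S, ∃ w, x ∈ zpowers w ∧ y ∈ zpowers w) :
    ∃ w : G, w ^ p ^ k = 1 ∧ Subgroup.closure (S : Set G) = zpowers w := by
  rcases S.eq_empty_or_nonempty with rfl | hne
  · exact ⟨1, one_pow _, by simp⟩
  obtain ⟨g, hg, hgmax⟩ := S.exists_max_image orderOf hne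
  refine ⟨g, hSp g hg, le_antisymm ((closure_le _).mpr fun x hx => ?_)
    (zpowers_le.mpr (subset_closure hg))⟩
  obtain ⟨w, hxw, hgw⟩ := hS x hx g hg
  exact mem_zpowers_of_orderOf_dvd hxw hgw <| dvd_of_le_of_dvd_prime_pow hp
    (orderOf_dvd_of_pow_eq_one (hSp x hx)) (orderOf_dvd_of_pow_eq_one (hSp g hg)) (hgmax x hx)

theorem commute_of_mem_zpowers {w x y : G} (hx : x ∈ zpowers w) (hy : y ∈ zpowers w) :
    Commute x y := by
  obtain ⟨i, rfl⟩ := mem_zpowers_iff.mp hx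
  obtain ⟨j, rfl⟩ := mem_zpowers_iff.mp hy
  exact Commute.zpow_zpow_self w i j

theorem commute_of_mem_closure {S : Set G} (hS : ∀ x ∈ S, ∀ y ∈ S, Commute x y) {a b : G}
    (ha : a ∈ Subgroup.closure S) (hb : b ∈ Subgroup.closure S) : Commute a b :=
  Set.centralizer_centralizer_comm_of_comm hS _ (closure_le_centralizer_centralizer S ha) _
    (closure_le_centralizer_centralizer S hb)

theorem exists_closure_eq_zpowers_of_pow_eq_one [Finite G] {n : ℕ} (hn : 0 < n)
    (S : Finset G) (hSn : ∀ x ∈ S, x ^ n = 1)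
    (hS : ∀ x ∈ S, ∀ y ∈ S, ∃ w, x ∈ zpowers w ∧ y ∈ zpowers w) :
    ∃ w : G, w ^ n = 1 ∧ Subgroup.closure (S : Set G) = zpowers w := by
  classical
  induction n using Nat.recOnPrimeCoprime generalizing S with
  | zero => exact absurd hn (lt_irrefl 0)
  | prime_pow p k hp => exact exists_closure_eq_zpowers_of_pow_prime_pow_eq_one hp S hSn hS
  | coprime a b ha hb hab iha ihb =>
    obtain ⟨u, v, hsplit⟩ := exists_zpow_mul_zpow_eq_self_of_coprime (G := G) hab
    have hpow_le (k : ℤ) :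
        Subgroup.closure ((S.image (· ^ k) : Finset G) : Set G) ≤ Subgroup.closure S := by
      rw [closure_le, Finset.coe_image, Set.image_subset_iff]
      exact fun x hx => zpow_mem (subset_closure hx) k
    have hS_image (k : ℤ) : ∀ x ∈ S.image (· ^ k), ∀ y ∈ S.image (· ^ k),
        ∃ w, x ∈ zpowers w ∧ y ∈ zpowers w := by
      simp only [Finset.forall_mem_image]
      intro x hx y hy
      obtain ⟨w, hxw, hyw⟩ := hS x hx y hy
      exact ⟨w, zpow_mem hxw k, zpow_mem hyw k⟩
    obtain ⟨wa, hwa, hSa⟩ := iha (by omega) (S.image (· ^ u))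
      (by simpa using fun x hx => (hsplit x (hSn x hx)).1) (hS_image u)
    obtain ⟨wb, hwb, hSb⟩ := ihb (by omega) (S.image (· ^ v))
      (by simpa using fun x hx => (hsplit x (hSn x hx)).2.1) (hS_image v)
    have hwa_mem : wa ∈ Subgroup.closure (S : Set G) := hpow_le u (hSa ▸ mem_zpowers wa)
    have hwb_mem : wb ∈ Subgroup.closure (S : Set G) := hpow_le v (hSb ▸ mem_zpowers wb)
    have hScomm : ∀ x ∈ (S : Set G), ∀ y ∈ (S : Set G), Commute x y := fun x hx y hy => by
      obtain ⟨w, hxw, hyw⟩ := hS x hx y hy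
      exact commute_of_mem_zpowers hxw hyw
    have hcomm : Commute wa wb := commute_of_mem_closure hScomm hwa_mem hwb_mem
    have hwa_le : zpowers wa ≤ zpowers (wa * wb) :=
      zpowers_le.mpr (hcomm.mem_zpowers_mul_of_coprime hab hwa hwb)
    have hwb_le : zpowers wb ≤ zpowers (wa * wb) := by
      rw [hcomm.eq]
      exact zpowers_le.mpr (hcomm.symm.mem_zpowers_mul_of_coprime hab.symm hwb hwa)
    have hpow : (wa * wb) ^ (a * b) = 1 := by
      rw [hcomm.mul_pow, pow_mul, hwa, one_pow, one_mul, mul_comm, pow_mul, hwb, one_pow]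
    refine ⟨wa * wb, hpow, le_antisymm ((closure_le _).mpr fun x hx => ?_)
      (zpowers_le.mpr (mul_mem hwa_mem hwb_mem))⟩
    rw [← (hsplit x (hSn x hx)).2.2]
    exact mul_mem (hwa_le (hSa ▸ subset_closure (Finset.mem_image_of_mem _ hx)))
      (hwb_le (hSb ▸ subset_closure (Finset.mem_image_of_mem _ hx)))

theorem isCyclic_closure_of_pairwise_isCyclic [Finite G] (S : Finset G)
    (hS : ∀ x ∈ S, ∀ y ∈ S, x ≠ y → IsCyclic (Subgroup.closure ({x, y} : Set G))) :
    IsCyclic (Subgroup.closure (S : Set G)) := by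
  have hpair : ∀ x ∈ S, ∀ y ∈ S, ∃ w, x ∈ zpowers w ∧ y ∈ zpowers w := by
    intro x hx y hy
    rcases eq_or_ne x y with rfl | hxy
    · exact ⟨x, mem_zpowers x, mem_zpowers x⟩
    obtain ⟨w, hw⟩ :=
      (Subgroup.closure {x, y}).isCyclic_iff_exists_zpowers_eq_top.mp (hS x hx y hy hxy)
    exact ⟨w, hw ▸ subset_closure (by simp), hw ▸ subset_closure (by simp)⟩
  obtain ⟨w, -, hw⟩ :=
    exists_closure_eq_zpowers_of_pow_eq_one Nat.card_pos S (fun x _ => pow_card_eq_one') hpair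
  exact hw ▸ isCyclic_zpowers w

theorem IsCyclic.exists_isMaxCyclic_ge [Finite G] {H : Subgroup G} (hH : IsCyclic H) :
    ∃ M : Subgroup G, IsMaxCyclic M ∧ H ≤ M := by
  obtain ⟨M, ⟨hMcyc, hHM⟩, hMmax⟩ := Set.Finite.exists_maximalFor id
    {N : Subgroup G | IsCyclic N ∧ H ≤ N} (Set.toFinite _) ⟨H, hH, le_rfl⟩
  exact ⟨M, ⟨hMcyc, fun N hN hMN => le_antisymm hMN (hMmax ⟨hN, hHM.trans hMN⟩ hMN)⟩, hHM⟩

end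

theorem maximal_reduced_clique_subset_maxCyclic_general (G : Type*) [Group G] [Fintype G]
    (S : Finset G)
    (hadj : ∀ x ∈ S, ∀ y ∈ S, x ≠ y → (enhancedPowerGraph G).Adj x y) :
    ∃ M : Subgroup G, IsMaxCyclic M ∧ (↑S : Set G) ⊆ (M : Set G) := by
  have hcyc :=
    isCyclic_closure_of_pairwise_isCyclic S fun x hx y hy hxy => (hadj x hx y hy hxy).2
  obtain ⟨M, hM, hle⟩ := hcyc.exists_isMaxCyclic_ge
  exact ⟨M, hM, subset_closure.trans hle⟩

/-- Lemma 4.2: a maximal clique of the reduced graph `ℛ_{𝒫_E(G)}` (a maximal set of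
pairwise adjacent representatives with pairwise distinct closed neighborhoods) is
contained in some maximal cyclic subgroup of `G`. -/
theorem maximal_reduced_clique_subset_maxCyclic (G : Type*) [Group G] [Fintype G]
    (S : Finset G)
    (hadj : ∀ x ∈ S, ∀ y ∈ S, x ≠ y → (enhancedPowerGraph G).Adj x y)
    (hcls : ∀ x ∈ S, ∀ y ∈ S, x ≠ y →
      closedNbhd (enhancedPowerGraph G) x ≠ closedNbhd (enhancedPowerGraph G) y)
    (hmax : ¬∃ z : G,
      (∀ x ∈ S, closedNbhd (enhancedPowerGraph G) z ≠ closedNbhd (enhancedPowerGraph G) x) ∧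
      ∀ x ∈ S, (enhancedPowerGraph G).Adj z x) :
    ∃ M : Subgroup G, IsMaxCyclic M ∧ (↑S : Set G) ⊆ (M : Set G) :=
  maximal_reduced_clique_subset_maxCyclic_general G S hadj
end
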